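/- arXiv:2412.18595 — 2 statements merged into one kernel-verified Lean document; each statement's English description precedes it below -/
import Mathlib

section
/- Let G be a 2-connected plane graph. The set B of boundaries of all bounded faces forms a basis of the cycle space of G in which every edge has charge at most 2, and every edge on the outer face has charge exactly 1. -/
open scoped Classical

noncomputable section

/-- Helper: quotients of finite types are finite. -/
noncomputable def quotFintype {α : Type} [Fintype α] (r : α → α → Prop) : Fintype (Quot r) :=
  Fintype.ofSurjective (Quot.mk r) fun q => Quot.exists_rep q

/-- A finite multigraph.  Each edge `e` carries an (arbitrarily chosen) ordering of its two
endpoints, `fst e` and `snd e`; a loop is an edge with `fst e = snd e`. -/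
structure Multigraph where
  V : Type
  E : Type
  fintV : Fintype V
  fintE : Fintype E
  fst : E → V
  snd : E → V

attribute [instance] Multigraph.fintV Multigraph.fintE

namespace Multigraph

variable (G : Multigraph)

/-- Incidence of a vertex and an edge, modulo 2 (a loop is incident twice, i.e. 0 mod 2). -/
noncomputable def inc (v : G.V) (e : G.E) : ZMod 2 :=
  (if G.fst e = v then 1 else 0) + (if G.snd e = v then 1 else 0)

/-- The cycle space of `G` over `F_2`: characteristic vectors of edge sets in which every
vertex has even degree (i.e. Eulerian subgraphs), with addition = symmetric difference. -/
noncomputable def cycleSpace : Submodule (ZMod 2) (G.E → ZMod 2) where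
  carrier := {x | ∀ v : G.V, ∑ e : G.E, G.inc v e * x e = 0}
  zero_mem' := by intro v; simp
  add_mem' := by
    intro a b ha hb v
    have h : ∀ e : G.E, G.inc v e * (a + b) e = G.inc v e * a e + G.inc v e * b e := by
      intro e
      show G.inc v e * (a e + b e) = G.inc v e * a e + G.inc v e * b e
      ring
    rw [Finset.sum_congr rfl fun e _ => h e, Finset.sum_add_distrib, ha v, hb v, add_zero]
  smul_mem' := by
    intro c x hx v
    have h : ∀ e : G.E, G.inc v e * (c • x) e = c * (G.inc v e * x e) := by
      intro e
      show G.inc v e * (c * x e) = c * (G.inc v e * x e)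
      ring
    rw [Finset.sum_congr rfl fun e _ => h e, ← Finset.mul_sum, hx v, mul_zero]

/-- The charge of an edge `e` with respect to a collection `B` of (characteristic vectors of)
subgraphs: the number of members of `B` containing `e`. -/
noncomputable def charge (B : Finset (G.E → ZMod 2)) (e : G.E) : ℕ :=
  (B.filter fun x => x e ≠ 0).card

/-- `B` is a basis of the cycle space of `G`. -/
def IsCycleBasis (B : Finset (G.E → ZMod 2)) : Prop :=
  (∀ x ∈ B, x ∈ G.cycleSpace) ∧
    LinearIndependent (ZMod 2) (fun x : B => (x : G.E → ZMod 2)) ∧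
    Submodule.span (ZMod 2) (B : Set (G.E → ZMod 2)) = G.cycleSpace

/-- `B` is a `k`-basis: a basis of the cycle space in which every edge has charge at most `k`. -/
def IsKBasis (k : ℕ) (B : Finset (G.E → ZMod 2)) : Prop :=
  G.IsCycleBasis B ∧ ∀ e : G.E, G.charge B e ≤ k

/-- The basis number of `G`: the least `k` such that `G` has a `k`-basis. -/
noncomputable def basisNum : ℕ := sInf {k | ∃ B, G.IsKBasis k B}

/-- Adjacency of two vertices. -/
def Adj (a b : G.V) : Prop :=
  ∃ e : G.E, (G.fst e = a ∧ G.snd e = b) ∨ (G.fst e = b ∧ G.snd e = a)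

/-- Connectivity. -/
def Connected : Prop :=
  Nonempty G.V ∧ ∀ a b : G.V, Relation.ReflTransGen G.Adj a b

/-- Degree of a vertex (a loop counts twice). -/
noncomputable def degree (v : G.V) : ℕ :=
  ∑ e : G.E, ((if G.fst e = v then 1 else 0) + (if G.snd e = v then 1 else 0))

/-- The subgraph with the same vertex set and edge set restricted to `S`. -/
noncomputable def edgeRestrict (S : Set G.E) : Multigraph where
  V := G.V
  E := S
  fintV := G.fintV
  fintE := (Set.toFinite S).fintype
  fst := fun e => G.fst e.1
  snd := fun e => G.snd e.1

/-- Deletion of a vertex (and all edges incident with it). -/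
noncomputable def deleteVertex (v : G.V) : Multigraph where
  V := {u : G.V // u ≠ v}
  E := {e : G.E // G.fst e ≠ v ∧ G.snd e ≠ v}
  fintV := by classical exact inferInstance
  fintE := by classical exact inferInstance
  fst := fun e => ⟨G.fst e.1, e.2.1⟩
  snd := fun e => ⟨G.snd e.1, e.2.2⟩

/-- `G` is 2-connected: at least 3 vertices, connected, and no cutvertex. -/
def TwoConnected : Prop :=
  G.Connected ∧ 3 ≤ Nat.card G.V ∧ ∀ v : G.V, (G.deleteVertex v).Connected

/-- A cycle of length `n` in `G`: `n` distinct vertices and `n` distinct edges, with edge `i`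
joining vertex `i` to vertex `i+1` (cyclically). -/
def IsCycleOn (n : ℕ) (vs : Fin n → G.V) (es : Fin n → G.E) : Prop :=
  Function.Injective vs ∧ Function.Injective es ∧
    ∀ i : Fin n,
      (G.fst (es i) = vs i ∧ G.snd (es i) = vs (finRotate n i)) ∨
      (G.fst (es i) = vs (finRotate n i) ∧ G.snd (es i) = vs i)

/-- A path with `n` edges, given by its (distinct) vertices and its edges. -/
def IsPathOn (n : ℕ) (vs : Fin (n + 1) → G.V) (es : Fin n → G.E) : Prop :=
  Function.Injective vs ∧
    ∀ i : Fin n,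
      (G.fst (es i) = vs i.castSucc ∧ G.snd (es i) = vs i.succ) ∨
      (G.fst (es i) = vs i.succ ∧ G.snd (es i) = vs i.castSucc)

/-- `p` is the characteristic vector of (the edge set of) a path from `s` to `t`. -/
def IsPathVec (s t : G.V) (p : G.E → ZMod 2) : Prop :=
  ∃ (n : ℕ) (vs : Fin (n + 1) → G.V) (es : Fin n → G.E),
    G.IsPathOn n vs es ∧ vs 0 = s ∧ vs (Fin.last n) = t ∧
      ∀ f : G.E, p f ≠ 0 ↔ ∃ i, es i = f

/-- Two edges lie in a common block: they are equal, or they lie on a common cycle. -/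
def BlockRel (e f : G.E) : Prop :=
  e = f ∨ ∃ (n : ℕ) (vs : Fin n → G.V) (es : Fin n → G.E),
    1 ≤ n ∧ G.IsCycleOn n vs es ∧ (∃ i, es i = e) ∧ (∃ j, es j = f)

/-- `T` is a spanning tree of `G` (as an edge set): the spanning subgraph with edge set `T`
is connected and has no cycles. -/
def IsSpanningTree (T : Set G.E) : Prop :=
  (G.edgeRestrict T).Connected ∧
    ∀ (n : ℕ) (vs : Fin n → (G.edgeRestrict T).V) (es : Fin n → (G.edgeRestrict T).E),
      (G.edgeRestrict T).IsCycleOn n vs es → n = 0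

/-- Contraction of the edge `e`: identify its two endpoints and delete `e`. -/
noncomputable def contract (e : G.E) : Multigraph where
  V := Quot (fun a b : G.V => a = G.fst e ∧ b = G.snd e)
  E := {f : G.E // f ≠ e}
  fintV := quotFintype _
  fintE := by classical exact inferInstance
  fst := fun f => Quot.mk _ (G.fst f.1)
  snd := fun f => Quot.mk _ (G.snd f.1)

/-- Addition of a (possibly parallel) edge joining `u` and `v`. -/
noncomputable def addEdge (u v : G.V) : Multigraph where
  V := G.V
  E := Option G.E
  fintV := G.fintV
  fintE := inferInstance
  fst := fun o => o.elim u G.fst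
  snd := fun o => o.elim v G.snd

/-- Subdivision of the edge `e`: delete `e` and add a new vertex (`none`) joined to both
endpoints of `e`. -/
noncomputable def subdivide (e : G.E) : Multigraph where
  V := Option G.V
  E := {f : G.E // f ≠ e} ⊕ Bool
  fintV := inferInstance
  fintE := by classical exact inferInstance
  fst := Sum.elim (fun f => some (G.fst f.1))
    (fun b => cond b (some (G.fst e)) (some (G.snd e)))
  snd := Sum.elim (fun f => some (G.snd f.1)) (fun _ => none)

/-- Replacement of the edge `e` of `G` by the graph `H` with terminals `s`, `t`:
delete `e`, take the disjoint union with `H`, and identify the endpoints of `e`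
with the terminals. -/
noncomputable def replaceEdge (e : G.E) (H : Multigraph) (s t : H.V) : Multigraph where
  V := Quot (fun a b : G.V ⊕ H.V =>
        (a = Sum.inl (G.fst e) ∧ b = Sum.inr s) ∨ (a = Sum.inl (G.snd e) ∧ b = Sum.inr t))
  E := {f : G.E // f ≠ e} ⊕ H.E
  fintV := quotFintype _
  fintE := by classical exact inferInstance
  fst := Sum.elim (fun f => Quot.mk _ (Sum.inl (G.fst f.1)))
    (fun f => Quot.mk _ (Sum.inr (H.fst f)))
  snd := Sum.elim (fun f => Quot.mk _ (Sum.inl (G.snd f.1)))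
    (fun f => Quot.mk _ (Sum.inr (H.snd f)))

/-! ### Combinatorial embeddings (rotation systems) and planarity -/

/-- Darts: each edge gives two darts. -/
def Dart : Type := G.E × Bool

noncomputable instance : Fintype G.Dart := inferInstanceAs (Fintype (G.E × Bool))

/-- The vertex at which a dart is based. -/
def dartVertex (d : G.Dart) : G.V := cond d.2 (G.fst d.1) (G.snd d.1)

/-- The involution exchanging the two darts of each edge. -/
def dartFlip : Equiv.Perm G.Dart where
  toFun d := (d.1, !d.2)
  invFun d := (d.1, !d.2)
  left_inv := fun d => by cases d; simp <;> rfl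
  right_inv := fun d => by cases d; simp <;> rfl

/-- `σ` is a rotation system: its orbits are exactly the sets of darts based at a
common vertex. -/
def IsRotation (σ : Equiv.Perm G.Dart) : Prop :=
  ∀ d d' : G.Dart, σ.SameCycle d d' ↔ G.dartVertex d = G.dartVertex d'

/-- The face permutation of a rotation system. -/
def facePerm (σ : Equiv.Perm G.Dart) : Equiv.Perm G.Dart := G.dartFlip.trans σ

/-- The faces of the embedding given by `σ`: orbits of the face permutation. -/
def Faces (σ : Equiv.Perm G.Dart) : Type := Quot (G.facePerm σ).SameCycle

/-- The face containing a given dart. -/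
def faceOf (σ : Equiv.Perm G.Dart) (d : G.Dart) : G.Faces σ := Quot.mk _ d

noncomputable def numFaces (σ : Equiv.Perm G.Dart) : ℕ := Nat.card (G.Faces σ)

noncomputable def numComponents : ℕ := Nat.card (Quot G.Adj)

/-- The number of connected components containing at least one edge. -/
noncomputable def numEdgedComponents : ℕ :=
  Nat.card {c : Quot G.Adj // ∃ e : G.E, Quot.mk G.Adj (G.fst e) = c}

/-- `σ` is a planar (genus zero) embedding, by Euler's formula
(componentwise `V - E + F = 2`, where components without edges contribute one global face). -/
def IsPlanarRotation (σ : Equiv.Perm G.Dart) : Prop :=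
  G.IsRotation σ ∧
    G.numFaces σ + Nat.card G.V = Nat.card G.E + G.numComponents + G.numEdgedComponents

/-- `G` is planar: it admits a genus-zero combinatorial embedding. -/
def IsPlanar : Prop := ∃ σ : Equiv.Perm G.Dart, G.IsPlanarRotation σ

/-- The boundary of a face, as an element of `F_2^E`: the edges having exactly one of
their two darts on the face. -/
noncomputable def faceBoundary (σ : Equiv.Perm G.Dart) (c : G.Faces σ) : G.E → ZMod 2 :=
  fun e => ∑ b : Bool, if G.faceOf σ (e, b) = c then 1 else 0

/-- The vertex `v` lies on the face `c`. -/
def VertexOnFace (σ : Equiv.Perm G.Dart) (v : G.V) (c : G.Faces σ) : Prop :=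
  ∃ d : G.Dart, G.faceOf σ d = c ∧ G.dartVertex d = v

/-- The edge `e` lies on the face `c`. -/
def EdgeOnFace (σ : Equiv.Perm G.Dart) (e : G.E) (c : G.Faces σ) : Prop :=
  ∃ b : Bool, G.faceOf σ (e, b) = c

end Multigraph

/-! Each face boundary is a cycle, because a face enters every vertex as often as it leaves it.
If `∑ c, φ c • faceBoundary σ c = 0`, then `φ` takes the same value on the two faces of every
edge; the function `d ↦ φ (faceOf σ d)` on darts is then invariant under the flip and the face
permutation, hence under the rotation, so it is constant at each vertex and, the graph being
connected, constant. Since `φ o = 0` the bounded boundaries are independent, and Euler's formula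
makes their number `F - 1 = E - V + 1` the dimension of the cycle space. An edge lies on the
boundaries of at most its two faces. A 2-connected graph has no bridge, so every edge lies on a
cycle and hence on some bounded boundary; for an edge with a dart on `o` this is the face of its
other dart. -/

namespace Multigraph

variable (G : Multigraph)

instance (σ : Equiv.Perm G.Dart) : Fintype (G.Faces σ) := quotFintype _

@[simp]
lemma dartFlip_dartFlip (d : G.Dart) : G.dartFlip (G.dartFlip d) = d := by
  rcases d with ⟨e, _ | _⟩ <;> rfl

lemma facePerm_dartFlip (σ : Equiv.Perm G.Dart) (d : G.Dart) :
    G.facePerm σ (G.dartFlip d) = σ d := by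
  simp [facePerm]

lemma faceOf_facePerm (σ : Equiv.Perm G.Dart) (d : G.Dart) :
    G.faceOf σ (G.facePerm σ d) = G.faceOf σ d :=
  (Quot.sound ⟨1, by simp⟩ : G.faceOf σ d = _).symm

variable {G}

lemma IsRotation.dartVertex_apply {σ : Equiv.Perm G.Dart} (hrot : G.IsRotation σ)
    (d : G.Dart) : G.dartVertex (σ d) = G.dartVertex d :=
  (hrot (σ d) d).mp ⟨-1, by simp⟩

lemma IsRotation.dartVertex_facePerm {σ : Equiv.Perm G.Dart} (hrot : G.IsRotation σ)
    (d : G.Dart) : G.dartVertex (G.facePerm σ d) = G.dartVertex (G.dartFlip d) :=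
  hrot.dartVertex_apply _

variable (G)

lemma inc_eq_dartVertex (v : G.V) (e : G.E) (b : Bool) :
    G.inc v e = (if G.dartVertex (e, b) = v then 1 else 0) +
      (if G.dartVertex (G.dartFlip (e, b)) = v then 1 else 0) := by
  cases b
  · exact add_comm _ _
  · rfl

lemma sum_dart {M : Type*} [AddCommMonoid M] (F : G.Dart → M) :
    ∑ d, F d = ∑ e, ∑ b, F (e, b) :=
  Fintype.sum_prod_type F

lemma faceBoundary_mem_cycleSpace {σ : Equiv.Perm G.Dart} (hrot : G.IsRotation σ)
    (c : G.Faces σ) : G.faceBoundary σ c ∈ G.cycleSpace := by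
  intro v
  let onFace : G.Dart → ZMod 2 := fun d => if G.faceOf σ d = c then 1 else 0
  let atV : G.Dart → ZMod 2 := fun d => if G.dartVertex d = v then 1 else 0
  calc ∑ e, G.inc v e * G.faceBoundary σ c e
      = ∑ d, onFace d * atV d + ∑ d, onFace d * atV (G.dartFlip d) := by
        simp only [← Finset.sum_add_distrib, ← mul_add, sum_dart, faceBoundary, Finset.mul_sum]
        refine Finset.sum_congr rfl fun e _ => Finset.sum_congr rfl fun b _ => ?_
        rw [mul_comm, G.inc_eq_dartVertex v e b]
    _ = ∑ d, onFace d * atV d + ∑ d, onFace d * atV d := by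
        congr 1
        conv_rhs => rw [← Equiv.sum_comp (G.facePerm σ)]
        refine Finset.sum_congr rfl fun d _ => ?_
        simp only [onFace, atV, faceOf_facePerm, hrot.dartVertex_facePerm]
    _ = 0 := ZModModule.add_self _

lemma eq_faceOf_of_faceBoundary_ne_zero {σ : Equiv.Perm G.Dart} {c : G.Faces σ} {e : G.E}
    (h : G.faceBoundary σ c e ≠ 0) :
    c = G.faceOf σ (e, true) ∨ c = G.faceOf σ (e, false) := by
  contrapose! h
  simp only [faceBoundary, Fintype.sum_bool, if_neg (Ne.symm h.1), if_neg (Ne.symm h.2), add_zero]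

lemma sum_smul_faceBoundary_apply (σ : Equiv.Perm G.Dart) (φ : G.Faces σ → ZMod 2) (e : G.E) :
    (∑ c, φ c • G.faceBoundary σ c) e = ∑ b, φ (G.faceOf σ (e, b)) := by
  simp only [Finset.sum_apply, Pi.smul_apply, faceBoundary, smul_eq_mul, Finset.mul_sum]
  rw [Finset.sum_comm]
  simp

variable {G}

lemma Adj.exists_dart {a b : G.V} (h : G.Adj a b) :
    ∃ d : G.Dart, G.dartVertex d = a ∧ G.dartVertex (G.dartFlip d) = b := by
  obtain ⟨e, ⟨h₁, h₂⟩ | ⟨h₁, h₂⟩⟩ := h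
  · exact ⟨(e, true), h₁, h₂⟩
  · exact ⟨(e, false), h₂, h₁⟩

lemma IsRotation.eq_of_invariant {σ : Equiv.Perm G.Dart} (hrot : G.IsRotation σ)
    (hconn : G.Connected) {M : Type*} {h : G.Dart → M}
    (hflip : ∀ d, h (G.dartFlip d) = h d) (hface : ∀ d, h (G.facePerm σ d) = h d)
    (d d' : G.Dart) : h d = h d' := by
  have hσ : h ∘ σ = h := funext fun d => by
    rw [Function.comp_apply, ← G.facePerm_dartFlip, hface, hflip]
  have hvertex : ∀ d d', G.dartVertex d = G.dartVertex d' → h d = h d' := by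
    intro d d' hv
    obtain ⟨n, rfl⟩ := ((hrot d d').mpr hv).exists_nat_pow_eq
    rw [← Equiv.Perm.iterate_eq_pow]
    exact (congrFun (Function.iterate_invariant hσ n) d).symm
  have hpath : ∀ b, Relation.ReflTransGen G.Adj (G.dartVertex d) b →
      ∀ d', G.dartVertex d' = b → h d = h d' := by
    intro b hb
    induction hb with
    | refl => exact fun d' hd' => hvertex d d' hd'.symm
    | tail _ hadj ih =>
      obtain ⟨d₁, hd₁, hd₁'⟩ := hadj.exists_dart
      intro d' hd'
      rw [ih d₁ hd₁, ← hflip d₁]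
      exact hvertex _ _ (hd₁'.trans hd'.symm)
  exact hpath _ (hconn.2 _ _) d' rfl

lemma IsRotation.eq_of_sum_smul_faceBoundary_eq_zero {σ : Equiv.Perm G.Dart}
    (hrot : G.IsRotation σ) (hconn : G.Connected) {φ : G.Faces σ → ZMod 2}
    (hφ : ∑ c, φ c • G.faceBoundary σ c = 0) (c c' : G.Faces σ) : φ c = φ c' := by
  have hflip : ∀ d, φ (G.faceOf σ (G.dartFlip d)) = φ (G.faceOf σ d) := by
    rintro ⟨e, b⟩
    have he := congrFun hφ e
    rw [sum_smul_faceBoundary_apply, Fintype.sum_bool, Pi.zero_apply, CharTwo.add_eq_zero] at he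
    cases b
    · exact he
    · exact he.symm
  induction c using Quot.ind with | _ d =>
  induction c' using Quot.ind with | _ d' =>
  exact hrot.eq_of_invariant (h := fun d => φ (G.faceOf σ d)) hconn hflip
    (fun d => by rw [faceOf_facePerm]) d d'

lemma IsRotation.linearIndependent_faceBoundary {σ : Equiv.Perm G.Dart} (hrot : G.IsRotation σ)
    (hconn : G.Connected) (o : G.Faces σ) :
    LinearIndependent (ZMod 2) (fun c : {c : G.Faces σ // c ≠ o} => G.faceBoundary σ c.1) := by
  rw [Fintype.linearIndependent_iff]
  intro g hg c
  let φ : G.Faces σ → ZMod 2 := fun c => if h : c = o then 0 else g ⟨c, h⟩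
  have hφ : ∑ c, φ c • G.faceBoundary σ c = 0 := by
    rw [← Fintype.sum_subtype_add_sum_subtype (· = o),
      Finset.sum_eq_zero fun c _ => by simp [φ, c.2], zero_add]
    convert hg using 2 with c
    simp [φ, c.2]
  simpa [φ, c.2] using hrot.eq_of_sum_smul_faceBoundary_eq_zero hconn hφ c o

open scoped Matrix

variable (G)

def incMatrix : Matrix G.V G.E (ZMod 2) := Matrix.of G.inc

lemma cycleSpace_eq_ker : G.cycleSpace = LinearMap.ker G.incMatrix.mulVecLin := by
  ext x
  simp only [LinearMap.mem_ker, Matrix.mulVecLin_apply, funext_iff]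
  rfl

lemma incMatrix_mulVec_single (e : G.E) :
    G.incMatrix *ᵥ Pi.single e 1 = Pi.single (G.fst e) 1 + Pi.single (G.snd e) 1 := by
  ext v
  simp [incMatrix, inc, Pi.single_apply, eq_comm]

lemma sum_inc (e : G.E) : ∑ v, G.inc v e = 0 := by
  simp [inc, Finset.sum_add_distrib, ZModModule.add_self]

def AdjVia (S : Set G.E) (a b : G.V) : Prop :=
  ∃ e ∈ S, (G.fst e = a ∧ G.snd e = b) ∨ (G.fst e = b ∧ G.snd e = a)

instance (S : Set G.E) : Std.Symm (G.AdjVia S) :=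
  ⟨fun _ _ ⟨e, he, h⟩ => ⟨e, he, h.symm⟩⟩

variable {G}

lemma exists_mulVec_eq_of_reflTransGen {S : Set G.E} {a b : G.V}
    (h : Relation.ReflTransGen (G.AdjVia S) a b) :
    ∃ x : G.E → ZMod 2, (∀ f ∉ S, x f = 0) ∧
      G.incMatrix *ᵥ x = Pi.single a 1 + Pi.single b 1 := by
  induction h with
  | refl => exact ⟨0, fun _ _ => rfl, by rw [Matrix.mulVec_zero, ZModModule.add_self]⟩
  | @tail b c _ hbc ih =>
    obtain ⟨x, hxS, hx⟩ := ih
    obtain ⟨f, hfS, hf⟩ := hbc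
    refine ⟨x + Pi.single f 1, fun g hg => ?_, ?_⟩
    · simp [hxS g hg, Pi.single_eq_of_ne (ne_of_mem_of_not_mem hfS hg).symm]
    · have hbb := ZModModule.add_self (Pi.single b 1 : G.V → ZMod 2)
      rw [Matrix.mulVec_add, hx, G.incMatrix_mulVec_single]
      rcases hf with ⟨rfl, rfl⟩ | ⟨rfl, rfl⟩
      · linear_combination hbb
      · linear_combination hbb

lemma Connected.reflTransGen_adjVia_univ (hconn : G.Connected) (a b : G.V) :
    Relation.ReflTransGen (G.AdjVia Set.univ) a b :=
  Relation.ReflTransGen.mono (fun _ _ ⟨e, he⟩ => ⟨e, Set.mem_univ e, he⟩) _ _ (hconn.2 a b)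

def coordSum (α : Type*) [Fintype α] : Module.Dual (ZMod 2) (α → ZMod 2) :=
  Fintype.linearCombination (ZMod 2) fun _ => 1

lemma coordSum_apply {α : Type*} [Fintype α] (y : α → ZMod 2) :
    coordSum α y = ∑ a, y a := by
  simp [coordSum, Fintype.linearCombination_apply]

lemma Connected.range_mulVecLin_incMatrix (hconn : G.Connected) :
    LinearMap.range G.incMatrix.mulVecLin = LinearMap.ker (coordSum G.V) := by
  apply le_antisymm
  · rintro _ ⟨x, rfl⟩
    rw [LinearMap.mem_ker, coordSum_apply]
    simp only [Matrix.mulVecLin_apply, Matrix.mulVec, dotProduct]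
    rw [Finset.sum_comm]
    simp [incMatrix, ← Finset.sum_mul, sum_inc]
  · intro y hy
    rw [LinearMap.mem_ker, coordSum_apply] at hy
    obtain ⟨v₀⟩ := hconn.1
    have hy' : y = ∑ a, y a • (Pi.single a 1 + Pi.single v₀ 1) := by
      ext w
      simp [Finset.sum_apply, Pi.single_apply, Finset.sum_add_distrib, hy]
    rw [hy']
    refine Submodule.sum_mem _ fun a _ => Submodule.smul_mem _ _ ?_
    obtain ⟨x, -, hx⟩ :=
      exists_mulVec_eq_of_reflTransGen (hconn.reflTransGen_adjVia_univ a v₀)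
    exact ⟨x, hx⟩

lemma Connected.finrank_cycleSpace_add_card (hconn : G.Connected) :
    Module.finrank (ZMod 2) G.cycleSpace + Fintype.card G.V = Fintype.card G.E + 1 := by
  obtain ⟨v₀⟩ := hconn.1
  have hsum : coordSum G.V ≠ 0 := fun h => by
    simpa [coordSum_apply] using LinearMap.congr_fun h (Pi.single v₀ 1)
  have h₁ := LinearMap.finrank_range_add_finrank_ker G.incMatrix.mulVecLin
  have h₂ := Module.Dual.finrank_ker_add_one_of_ne_zero hsum
  rw [hconn.range_mulVecLin_incMatrix] at h₁
  rw [G.cycleSpace_eq_ker]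
  simp only [Module.finrank_fintype_fun_eq_card] at h₁ h₂
  omega

lemma Connected.subsingleton_quot_adj (hconn : G.Connected) : Subsingleton (Quot G.Adj) :=
  ⟨fun x y => Quot.induction_on₂ x y fun a b =>
    Quot.eqvGen_sound (Relation.EqvGen.reflTransGen_le_eqvGen _ _ _ (hconn.2 a b))⟩

lemma Connected.numComponents_eq_one (hconn : G.Connected) : G.numComponents = 1 :=
  have := hconn.subsingleton_quot_adj
  Nat.card_eq_one_iff_unique.mpr ⟨inferInstance, ⟨Quot.mk _ hconn.1.some⟩⟩

lemma Connected.numEdgedComponents_eq_one (hconn : G.Connected) (e : G.E) :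
    G.numEdgedComponents = 1 :=
  have := hconn.subsingleton_quot_adj
  Nat.card_eq_one_iff_unique.mpr ⟨inferInstance, ⟨⟨_, e, rfl⟩⟩⟩

lemma IsPlanarRotation.card_faces_add_card {σ : Equiv.Perm G.Dart} (hσ : G.IsPlanarRotation σ)
    (hconn : G.Connected) (e : G.E) :
    Fintype.card (G.Faces σ) + Fintype.card G.V = Fintype.card G.E + 2 := by
  have h := hσ.2
  rw [hconn.numComponents_eq_one, hconn.numEdgedComponents_eq_one e, numFaces,
    Nat.card_eq_fintype_card, Nat.card_eq_fintype_card, Nat.card_eq_fintype_card] at h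
  exact h

lemma IsPlanarRotation.span_faceBoundary {σ : Equiv.Perm G.Dart} (hσ : G.IsPlanarRotation σ)
    (hconn : G.Connected) (e : G.E) (o : G.Faces σ) :
    Submodule.span (ZMod 2) (Set.range fun c : {c : G.Faces σ // c ≠ o} => G.faceBoundary σ c.1)
      = G.cycleSpace := by
  refine Submodule.eq_of_le_of_finrank_le ?_ ?_
  · exact Submodule.span_le.mpr <| Set.range_subset_iff.mpr fun c =>
      G.faceBoundary_mem_cycleSpace hσ.1 c.1
  · have hcard : Fintype.card {c : G.Faces σ // c ≠ o} + 1 = Fintype.card (G.Faces σ) := by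
      rw [Fintype.card_subtype_compl, Fintype.card_subtype_eq]
      have : 0 < Fintype.card (G.Faces σ) := Fintype.card_pos_iff.mpr ⟨o⟩
      omega
    have := hσ.card_faces_add_card hconn e
    have := hconn.finrank_cycleSpace_add_card
    rw [finrank_span_eq_card (hσ.1.linearIndependent_faceBoundary hconn o)]
    omega

lemma reflTransGen_adjVia_of_deleteVertex {z : G.V} {e : G.E} (hz : G.fst e = z ∨ G.snd e = z)
    {a b : (G.deleteVertex z).V} (h : Relation.ReflTransGen (G.deleteVertex z).Adj a b) :
    Relation.ReflTransGen (G.AdjVia {e}ᶜ) a.1 b.1 := by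
  refine Relation.ReflTransGen.lift Subtype.val
    (fun a b ⟨f, hf⟩ => (⟨f.1, ?_, ?_⟩ : G.AdjVia {e}ᶜ a.1 b.1)) _ _ h
  · rintro rfl
    exact hz.elim f.2.1 f.2.2
  · simpa only [deleteVertex, Subtype.ext_iff] using hf

lemma TwoConnected.exists_ne_ne (h2 : G.TwoConnected) (a b : G.V) : ∃ w, w ≠ a ∧ w ≠ b :=
  ENat.exists_ne_ne_of_three_le (by rw [ENat.card_eq_coe_natCard]; exact_mod_cast h2.2.1) a b

/-- In a 2-connected graph no edge is a bridge: with `w` a third vertex, either `w` is reachable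
from `fst e` avoiding `e`, and then `G - fst e` joins `w` to `snd e`, or `G - snd e` joins
`fst e` to `w` avoiding `e`. -/
lemma TwoConnected.reflTransGen_adjVia_compl (h2 : G.TwoConnected) (e : G.E) :
    Relation.ReflTransGen (G.AdjVia {e}ᶜ) (G.fst e) (G.snd e) := by
  by_cases huv : G.fst e = G.snd e
  · rw [huv]
  obtain ⟨w, hwu, hwv⟩ := h2.exists_ne_ne (G.fst e) (G.snd e)
  by_cases huw : Relation.ReflTransGen (G.AdjVia {e}ᶜ) (G.fst e) w
  · have hvw := (h2.2.2 (G.fst e)).2 ⟨G.snd e, Ne.symm huv⟩ ⟨w, hwu⟩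
    exact huw.trans (Std.Symm.symm _ _ (reflTransGen_adjVia_of_deleteVertex (Or.inl rfl) hvw))
  · exact absurd (reflTransGen_adjVia_of_deleteVertex (Or.inr rfl)
      ((h2.2.2 (G.snd e)).2 ⟨G.fst e, huv⟩ ⟨w, hwv⟩)) huw

lemma TwoConnected.exists_mem_cycleSpace_apply_ne_zero (h2 : G.TwoConnected) (e : G.E) :
    ∃ x ∈ G.cycleSpace, x e ≠ 0 := by
  obtain ⟨x, hxe, hx⟩ := exists_mulVec_eq_of_reflTransGen (h2.reflTransGen_adjVia_compl e)
  refine ⟨x + Pi.single e 1, ?_, by simp [hxe e (by simp)]⟩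
  rw [G.cycleSpace_eq_ker, LinearMap.mem_ker, Matrix.mulVecLin_apply, Matrix.mulVec_add, hx,
    G.incMatrix_mulVec_single, ZModModule.add_self]

lemma TwoConnected.nonempty_edge (h2 : G.TwoConnected) : Nonempty G.E := by
  obtain ⟨v⟩ := h2.1.1
  obtain ⟨w, hwv, -⟩ := h2.exists_ne_ne v v
  rcases (h2.1.2 v w).cases_head with hvw | ⟨_, ⟨e, _⟩, _⟩
  · exact absurd hvw.symm hwv
  · exact ⟨e⟩

lemma card_faceBoundary_ne_zero_le_two (σ : Equiv.Perm G.Dart) (p : G.Faces σ → Prop)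
    (e : G.E) :
    Nat.card {c : {c : G.Faces σ // p c} // G.faceBoundary σ c.1 e ≠ 0} ≤ 2 := by
  let ends : Finset (G.Faces σ) := {G.faceOf σ (e, true), G.faceOf σ (e, false)}
  let toEnds (c : {c : {c : G.Faces σ // p c} // G.faceBoundary σ c.1 e ≠ 0}) : ends :=
    ⟨c.1.1, by simpa [ends] using G.eq_faceOf_of_faceBoundary_ne_zero c.2⟩
  have hinj : Function.Injective toEnds := fun c c' h =>
    Subtype.ext (Subtype.ext (by simpa [toEnds] using congrArg Subtype.val h))
  calc _ ≤ Nat.card ends := Nat.card_le_card_of_injective _ hinj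
    _ ≤ 2 := by
      rw [Nat.card_eq_fintype_card, Fintype.card_coe]
      exact Finset.card_le_two

lemma card_faceBoundary_ne_zero_eq_one {σ : Equiv.Perm G.Dart} {o : G.Faces σ} {e : G.E}
    {x : G.E → ZMod 2} (hx : x ∈ Submodule.span (ZMod 2)
      (Set.range fun c : {c : G.Faces σ // c ≠ o} => G.faceBoundary σ c.1))
    (hxe : x e ≠ 0) (he : G.EdgeOnFace σ e o) :
    Nat.card {c : {c : G.Faces σ // c ≠ o} // G.faceBoundary σ c.1 e ≠ 0} = 1 := by
  obtain ⟨b, hb⟩ := he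
  have hunique : ∀ c : {c : G.Faces σ // c ≠ o}, G.faceBoundary σ c.1 e ≠ 0 →
      c.1 = G.faceOf σ (e, !b) := by
    intro c hc
    have := c.2
    rcases G.eq_faceOf_of_faceBoundary_ne_zero hc with h | h <;> cases b <;> simp_all
  obtain ⟨c, hc⟩ : ∃ c : {c : G.Faces σ // c ≠ o}, G.faceBoundary σ c.1 e ≠ 0 := by
    by_contra! hall
    refine hxe (Submodule.span_le.mpr ?_ hx : x ∈ LinearMap.ker (LinearMap.proj e))
    rintro _ ⟨c, rfl⟩
    exact hall c
  refine Nat.card_eq_one_iff_exists.mpr ⟨⟨c, hc⟩, fun c' => ?_⟩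
  exact Subtype.ext (Subtype.ext ((hunique _ c'.2).trans (hunique _ hc).symm))

end Multigraph

/-- Let `G` be a 2-connected plane graph (a 2-connected graph with a planar
combinatorial embedding `σ`, with outer face `o`).  The boundaries of the bounded faces
(faces `≠ o`) form a basis of the cycle space of `G` in which every edge has charge at most 2,
and every edge on the outer face has charge exactly 1. -/
theorem boundedFaces_basis (G : Multigraph) (h2 : G.TwoConnected)
    (σ : Equiv.Perm G.Dart) (hσ : G.IsPlanarRotation σ) (o : G.Faces σ) :
    (∀ c : {c : G.Faces σ // c ≠ o}, G.faceBoundary σ c.1 ∈ G.cycleSpace) ∧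
    LinearIndependent (ZMod 2)
      (fun c : {c : G.Faces σ // c ≠ o} => G.faceBoundary σ c.1) ∧
    Submodule.span (ZMod 2)
      (Set.range fun c : {c : G.Faces σ // c ≠ o} => G.faceBoundary σ c.1) = G.cycleSpace ∧
    (∀ e : G.E,
      Nat.card {c : {c : G.Faces σ // c ≠ o} // G.faceBoundary σ c.1 e ≠ 0} ≤ 2) ∧
    (∀ e : G.E, G.EdgeOnFace σ e o →
      Nat.card {c : {c : G.Faces σ // c ≠ o} // G.faceBoundary σ c.1 e ≠ 0} = 1) := by
  obtain ⟨e₀⟩ := h2.nonempty_edge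
  have hspan := hσ.span_faceBoundary h2.1 e₀ o
  refine ⟨fun c => G.faceBoundary_mem_cycleSpace hσ.1 c.1,
    hσ.1.linearIndependent_faceBoundary h2.1 o, hspan,
    fun e => G.card_faceBoundary_ne_zero_le_two σ _ e, fun e he => ?_⟩
  obtain ⟨x, hx, hxe⟩ := h2.exists_mem_cycleSpace_apply_ne_zero e
  exact Multigraph.card_faceBoundary_ne_zero_eq_one (hspan ▸ hx) hxe he
end
end

section
/- The Desargues graph (the bipartite double cover of the Petersen graph, a 3-regular graph on 20 vertices) has basis number exactly 3. -/
open scoped Classical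

noncomputable section

/-- The Desargues graph, as the generalized Petersen graph `GP(10,3)`: outer vertices
`(false, i)` forming a 10-cycle, inner vertices `(true, i)` joined by chords `i — i+3`,
and spokes joining `(false, i)` to `(true, i)`. -/
noncomputable abbrev desarguesGraph : Multigraph where
  V := Bool × ZMod 10
  E := Fin 3 × ZMod 10
  fintV := inferInstance
  fintE := inferInstance
  fst := fun p => if p.1 = 2 then (true, p.2) else (false, p.2)
  snd := fun p =>
    if p.1 = 0 then (false, p.2 + 1) else if p.1 = 1 then (true, p.2) else (true, p.2 + 3)


/-!
The ten hexagons (an inner edge, the spokes at its ends and the three outer edges joining them)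
together with the inner 10-cycle form a basis of the cycle space in which every edge lies on at
most three basis cycles. The dimension count `11 = 30 - 20 + 1` comes from a cotree: a
cycle-space vector vanishing on the ten inner edges and one outer edge vanishes everywhere, by
parity at the vertices.

For the lower bound, every nonzero vector of the cycle space has at least six edges (the graph
has girth 6; this is checked over the `2 ^ 11` combinations of the basis). A basis with every
charge at most 2 would then satisfy `11 * 6 ≤ ∑ charges ≤ 2 * 30`, which is false.
-/

namespace Multigraph

open Finset Module

variable {G : Multigraph}

theorem mem_cycleSpace_iff_of_loopless (hG : ∀ e, G.fst e ≠ G.snd e) {x : G.E → ZMod 2} :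
    x ∈ G.cycleSpace ↔
      ∀ v, ∑ e ∈ univ.filter (fun e => G.fst e = v ∨ G.snd e = v), x e = 0 := by
  have hinc : ∀ v e, G.inc v e * x e = if G.fst e = v ∨ G.snd e = v then x e else 0 := by
    intro v e
    by_cases h₁ : G.fst e = v <;> by_cases h₂ : G.snd e = v
    · exact absurd (h₁.trans h₂.symm) (hG e)
    all_goals simp [inc, h₁, h₂]
  simp only [sum_filter, ← hinc]
  rfl

theorem finrank_cycleSpace_le {ι : Type*} [Fintype ι] (c : ι → G.E)
    (hc : ∀ x ∈ G.cycleSpace, (∀ i, x (c i) = 0) → x = 0) :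
    finrank (ZMod 2) G.cycleSpace ≤ Fintype.card ι := by
  let restrict : G.cycleSpace →ₗ[ZMod 2] ι → ZMod 2 :=
    (LinearMap.funLeft (ZMod 2) (ZMod 2) c).comp G.cycleSpace.subtype
  have hinj : Function.Injective restrict := by
    refine (injective_iff_map_eq_zero restrict).mpr fun x hx => Subtype.ext ?_
    exact hc x x.2 fun i => congrFun hx i
  simpa using LinearMap.finrank_le_finrank_of_injective hinj

theorem isCycleBasis_image_single {ι : Type*} [Fintype ι] [DecidableEq ι]
    (f : (ι → ZMod 2) →ₗ[ZMod 2] G.E → ZMod 2) (hf : Function.Injective f)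
    (hrange : LinearMap.range f = G.cycleSpace) :
    G.IsCycleBasis (univ.image fun i => f (Pi.single i 1)) := by
  have hcoe : ((univ.image fun i => f (Pi.single i 1) : Finset _) : Set (G.E → ZMod 2)) =
      Set.range (f ∘ Pi.basisFun (ZMod 2) ι) := by
    ext; simp
  refine ⟨fun x hx => ?_, ?_, ?_⟩
  · obtain ⟨i, -, rfl⟩ := mem_image.mp hx
    exact hrange ▸ LinearMap.mem_range_self f _
  · exact ((Pi.basisFun (ZMod 2) ι).linearIndependent.map' f
      (LinearMap.ker_eq_bot.mpr hf)).linearIndepOn_id' hcoe.symm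
  · rw [hcoe, Set.range_comp, Submodule.span_image, (Pi.basisFun (ZMod 2) ι).span_eq,
      Submodule.map_top, hrange]

theorem sum_charge (B : Finset (G.E → ZMod 2)) :
    ∑ e, G.charge B e = ∑ x ∈ B, #(univ.filter fun e => x e ≠ 0) := by
  simp only [charge, card_filter]
  exact sum_comm

theorem charge_image_le {ι : Type*} (s : Finset ι) (v : ι → G.E → ZMod 2) (e : G.E) :
    G.charge (s.image v) e ≤ #(s.filter fun i => v i e ≠ 0) := by
  rw [charge, filter_image]
  exact card_image_le

theorem IsCycleBasis.card_eq_finrank {B : Finset (G.E → ZMod 2)} (hB : G.IsCycleBasis B) :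
    #B = finrank (ZMod 2) G.cycleSpace := by
  rw [← hB.2.2, finrank_span_finset_eq_card hB.2.1]

theorem IsKBasis.finrank_mul_le {k m : ℕ} {B : Finset (G.E → ZMod 2)} (hB : G.IsKBasis k B)
    (hsupp : ∀ x ∈ G.cycleSpace, x ≠ 0 → m ≤ #(univ.filter fun e => x e ≠ 0)) :
    finrank (ZMod 2) G.cycleSpace * m ≤ k * Fintype.card G.E := by
  obtain ⟨hbasis, hcharge⟩ := hB
  calc finrank (ZMod 2) G.cycleSpace * m = #B • m := by
        rw [hbasis.card_eq_finrank, smul_eq_mul]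
    _ ≤ ∑ x ∈ B, #(univ.filter fun e => x e ≠ 0) :=
      card_nsmul_le_sum _ _ _ fun x hx => hsupp x (hbasis.1 x hx) (hbasis.2.1.ne_zero ⟨x, hx⟩)
    _ = ∑ e, G.charge B e := (sum_charge B).symm
    _ ≤ ∑ _e : G.E, k := sum_le_sum fun e _ => hcharge e
    _ = k * Fintype.card G.E := by rw [sum_const, card_univ, smul_eq_mul, mul_comm]

theorem basisNum_eq_of_isKBasis {k : ℕ} {B : Finset (G.E → ZMod 2)} (hB : G.IsKBasis k B)
    (hmin : ∀ k' B', G.IsKBasis k' B' → k ≤ k') : G.basisNum = k :=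
  le_antisymm (Nat.sInf_le ⟨B, hB⟩) <|
    le_csInf ⟨k, B, hB⟩ fun k' ⟨B', hB'⟩ => hmin k' B' hB'

end Multigraph

namespace Desargues

open Finset Module Multigraph

def incidentEdges : Bool × ZMod 10 → Finset (Fin 3 × ZMod 10)
  | (false, k) => {(0, k), (0, k - 1), (1, k)}
  | (true, k) => {(1, k), (2, k), (2, k - 3)}

theorem fst_ne_snd : ∀ e, desarguesGraph.fst e ≠ desarguesGraph.snd e := by
  decide

theorem fst_eq_or_snd_eq_iff :
    ∀ v e, desarguesGraph.fst e = v ∨ desarguesGraph.snd e = v ↔ e ∈ incidentEdges v := by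
  decide

theorem mem_cycleSpace_iff {x : Fin 3 × ZMod 10 → ZMod 2} :
    x ∈ desarguesGraph.cycleSpace ↔
      ∀ k, x (0, k) + x (0, k - 1) + x (1, k) = 0 ∧ x (1, k) + x (2, k) + x (2, k - 3) = 0 := by
  have hfilter (v : Bool × ZMod 10) :
      univ.filter (fun e => desarguesGraph.fst e = v ∨ desarguesGraph.snd e = v) =
        incidentEdges v := by
    ext e
    simp only [mem_filter, mem_univ, true_and]
    exact fst_eq_or_snd_eq_iff v e
  have hout (k : ZMod 10) :
      ∑ e ∈ incidentEdges (false, k), x e = x (0, k) + x (0, k - 1) + x (1, k) := by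
    rw [incidentEdges, sum_insert (by revert k; decide), sum_pair (by revert k; decide), add_assoc]
  have hin (k : ZMod 10) :
      ∑ e ∈ incidentEdges (true, k), x e = x (1, k) + x (2, k) + x (2, k - 3) := by
    rw [incidentEdges, sum_insert (by revert k; decide), sum_pair (by revert k; decide), add_assoc]
  simp only [mem_cycleSpace_iff_of_loopless fst_ne_snd, hfilter, Prod.forall, Bool.forall_bool,
    hout, hin]
  exact ⟨fun h k => ⟨h.1 k, h.2 k⟩, fun h => ⟨fun k => (h k).1, fun k => (h k).2⟩⟩

/-- The sum of the hexagons `some i` and the inner cycle `none` with coefficients `g`. Hexagon `i`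
is made of the inner edge `(2, i)`, the spokes `(1, i)`, `(1, i + 3)` and the outer edges `(0, i)`,
`(0, i + 1)`, `(0, i + 2)`. -/
def combine : (Option (ZMod 10) → ZMod 2) →ₗ[ZMod 2] Fin 3 × ZMod 10 → ZMod 2 where
  toFun g
    | (0, k) => g (some k) + g (some (k - 1)) + g (some (k - 2))
    | (1, k) => g (some k) + g (some (k - 3))
    | (2, k) => g (some k) + g none
  map_add' g h := by
    funext ⟨t, k⟩
    fin_cases t <;> simp only [Pi.add_apply] <;> ring
  map_smul' c g := by
    funext ⟨t, k⟩
    fin_cases t <;> simp only [Pi.smul_apply, smul_eq_mul, RingHom.id_apply] <;> ring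

theorem combine_mem_cycleSpace (g : Option (ZMod 10) → ZMod 2) :
    combine g ∈ desarguesGraph.cycleSpace := by
  refine mem_cycleSpace_iff.mpr fun k => ⟨?_, ?_⟩ <;>
    simp only [combine, LinearMap.coe_mk, AddHom.coe_mk] <;> ring_nf <;> reduce_mod_char

theorem six_le_card_support_combine (g : Option (ZMod 10) → ZMod 2) (hg : g ≠ 0) :
    6 ≤ #(univ.filter fun e => combine g e ≠ 0) := by
  revert g
  decide +kernel

theorem combine_injective : Function.Injective combine := by
  refine (injective_iff_map_eq_zero combine).mpr fun g hg => by_contra fun hg0 => ?_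
  simpa [hg] using six_le_card_support_combine g hg0

theorem eq_zero_of_cotree {x : Fin 3 × ZMod 10 → ZMod 2} (hx : x ∈ desarguesGraph.cycleSpace)
    (hinner : ∀ k, x (2, k) = 0) (houter : x (0, 0) = 0) : x = 0 := by
  have hspoke : ∀ k, x (1, k) = 0 := fun k => by
    simpa [hinner] using (mem_cycleSpace_iff.mp hx k).2
  have hstep : ∀ k, x (0, k) = x (0, k - 1) := fun k => by
    simpa [hspoke, CharTwo.add_eq_zero] using (mem_cycleSpace_iff.mp hx k).1
  have hnat : ∀ n : ℕ, x (0, n) = 0 := by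
    intro n
    induction n with
    | zero => simpa using houter
    | succ n ih => rw [hstep, Nat.cast_succ, add_sub_cancel_right, ih]
  funext ⟨t, k⟩
  fin_cases t
  · simpa using hnat k.val
  · exact hspoke k
  · exact hinner k

theorem range_combine : LinearMap.range combine = desarguesGraph.cycleSpace := by
  refine Submodule.eq_of_le_of_finrank_le ?_ ?_
  · rintro _ ⟨g, rfl⟩
    exact combine_mem_cycleSpace g
  · rw [LinearMap.finrank_range_of_inj combine_injective, finrank_fintype_fun_eq_card]
    exact finrank_cycleSpace_le (fun i => i.elim (0, 0) fun k => (2, k))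
      fun x hx hc => eq_zero_of_cotree hx (fun k => hc (some k)) (hc none)

theorem finrank_cycleSpace : finrank (ZMod 2) desarguesGraph.cycleSpace = 11 := by
  rw [← range_combine, LinearMap.finrank_range_of_inj combine_injective]
  simp

theorem six_le_card_support (x : Fin 3 × ZMod 10 → ZMod 2) (hx : x ∈ desarguesGraph.cycleSpace)
    (hx0 : x ≠ 0) : 6 ≤ #(univ.filter fun e => x e ≠ 0) := by
  obtain ⟨g, rfl⟩ := range_combine ▸ hx
  exact six_le_card_support_combine g fun hg => hx0 (by simp [hg])

def basisCycles : Finset (Fin 3 × ZMod 10 → ZMod 2) :=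
  univ.image fun i => combine (Pi.single i 1)

theorem isKBasis_basisCycles : desarguesGraph.IsKBasis 3 basisCycles := by
  refine ⟨isCycleBasis_image_single (G := desarguesGraph) combine combine_injective range_combine,
    fun e => (charge_image_le _ _ e).trans ?_⟩
  revert e
  decide

end Desargues

/-- The Desargues graph (the bipartite double cover of the Petersen graph,
a 3-regular graph on 20 vertices) has basis number exactly 3. -/
theorem desargues_basisNum : desarguesGraph.basisNum = 3 := by
  refine Multigraph.basisNum_eq_of_isKBasis Desargues.isKBasis_basisCycles fun k B hB => ?_
  have hcount := hB.finrank_mul_le Desargues.six_le_card_support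
  rw [Desargues.finrank_cycleSpace, show Fintype.card desarguesGraph.E = 30 from rfl] at hcount
  omega
end
end
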